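/- Let R > 0 and let Δ̄ = {z ∈ ℂ : |z| ≤ R}. Let (f_n) be a sequence of continuous real-valued functions on Δ̄ such that for every n and every 0 < ε ≤ R one has f_n(0) ≤ sup_{|z|=ε} f_n(z). Suppose f_n converges to a function f uniformly on each circle {|z| = ε} for 0 < ε ≤ R, and that there exists a monotonically increasing function φ : (0, R] → ℝ with lim_{t→0⁺} φ(t) = −∞ such that f(z) ≤ φ(|z|) for all 0 < |z| ≤ R. Then liminf_{n→∞} f_n(0) = −∞. -/

import Mathlib

open Filter Topology

/- Pick a radius `ε` with `φ ε ≤ M - 2`. On the circle `‖z‖ = ε` the limit satisfies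
`f ≤ φ ε ≤ M - 2`, so by uniform convergence `fn n ≤ M - 1` there for all large `n`, and the
maximum principle gives `fn n 0 ≤ M - 1 < M`. As `M` is arbitrary, `fn n 0 → -∞`. -/

lemma exists_mem_Ioc_le_of_tendsto_atBot {β : Type*} [Preorder β] {φ : ℝ → β} {R : ℝ}
    (hR : 0 < R) (hφ : Tendsto φ (𝓝[>] 0) atBot) (M : β) : ∃ ε ∈ Set.Ioc 0 R, φ ε ≤ M :=
  ((hφ.eventually (eventually_le_atBot M)).and (Ioc_mem_nhdsGT hR)).exists.imp
    fun _ h => ⟨h.2, h.1⟩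

theorem stmt_13_general (R : ℝ) (hR : 0 < R) (f : ℂ → ℝ) (fn : ℕ → ℂ → ℝ)
    (hmax : ∀ n, ∀ ε : ℝ, 0 < ε → ε ≤ R →
      fn n 0 ≤ sSup ((fn n) '' {z : ℂ | ‖z‖ = ε}))
    (hconv : ∀ ε : ℝ, 0 < ε → ε ≤ R →
      TendstoUniformlyOn fn f atTop {z : ℂ | ‖z‖ = ε})
    (φ : ℝ → ℝ)
    (hφlim : Tendsto φ (nhdsWithin 0 (Set.Ioi 0)) atBot)
    (hfφ : ∀ z : ℂ, 0 < ‖z‖ → ‖z‖ ≤ R → f z ≤ φ (‖z‖)) :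
    liminf (fun n => (fn n 0 : EReal)) atTop = ⊥ := by
  refine (EReal.tendsto_nhds_bot_iff_real.2 fun M => ?_).liminf_eq
  obtain ⟨ε, ⟨hε0, hεR⟩, hφε⟩ := exists_mem_Ioc_le_of_tendsto_atBot hR hφlim (M - 2)
  have hcircle : {z : ℂ | ‖z‖ = ε}.Nonempty := ⟨ε, by simp [hε0.le]⟩
  have hf : ∀ z ∈ {z : ℂ | ‖z‖ = ε}, f z ≤ M - 2 := fun z (hz : ‖z‖ = ε) =>
    (hfφ z (hz ▸ hε0) (hz ▸ hεR)).trans (hz ▸ hφε)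
  filter_upwards [(hconv ε hε0 hεR).eventually_forall_le (by linarith : M - 2 < M - 1) hf]
    with n hn
  have hsup : sSup (fn n '' {z : ℂ | ‖z‖ = ε}) ≤ M - 1 :=
    csSup_le (hcircle.image _) (Set.forall_mem_image.2 hn)
  exact_mod_cast (hmax n ε hε0 hεR).trans_lt (hsup.trans_lt (by linarith))

theorem stmt_13 (R : ℝ) (hR : 0 < R) (f : ℂ → ℝ) (fn : ℕ → ℂ → ℝ)
    (hcont : ∀ n, ContinuousOn (fn n) {z : ℂ | ‖z‖ ≤ R})
    (hmax : ∀ n, ∀ ε : ℝ, 0 < ε → ε ≤ R →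
      fn n 0 ≤ sSup ((fn n) '' {z : ℂ | ‖z‖ = ε}))
    (hconv : ∀ ε : ℝ, 0 < ε → ε ≤ R →
      TendstoUniformlyOn fn f atTop {z : ℂ | ‖z‖ = ε})
    (φ : ℝ → ℝ) (hφ : MonotoneOn φ (Set.Ioc 0 R))
    (hφlim : Tendsto φ (nhdsWithin 0 (Set.Ioi 0)) atBot)
    (hfφ : ∀ z : ℂ, 0 < ‖z‖ → ‖z‖ ≤ R → f z ≤ φ (‖z‖)) :
    liminf (fun n => (fn n 0 : EReal)) atTop = ⊥ :=
  stmt_13_general R hR f fn hmax hconv φ hφlim hfφ
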